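/- arXiv:1208.5521 — 6 statements merged into one kernel-verified Lean document; each statement's English description precedes it below -/
import Mathlib

section
/- If a metric space X has strong measure zero, then for every Hausdorff function h the h-dimensional Hausdorff measure of X is zero. -/
open Set Filter MeasureTheory ENNReal

/-- A Hausdorff (gauge) function: nondecreasing, right-continuous on `[0,∞)`,
vanishing exactly at `0`. -/
def IsHausdorffFn (h : ℝ → ℝ) : Prop :=
  (∀ r, 0 ≤ r → 0 ≤ h r) ∧ MonotoneOn h (Set.Ici 0) ∧
  (∀ r, 0 ≤ r → ContinuousWithinAt h (Set.Ici r) r) ∧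
  ∀ r, 0 ≤ r → (h r = 0 ↔ r = 0)

/-- The `h`-dimensional Hausdorff measure associated to a gauge function `h`. -/
noncomputable def hMeas (h : ℝ → ℝ) {X : Type*} [EMetricSpace X] [MeasurableSpace X]
    [BorelSpace X] : Measure X :=
  Measure.mkMetric (fun r => ENNReal.ofReal (h r.toReal))

/-- Strong measure zero. -/
def SMZ (X : Type*) [MetricSpace X] : Prop :=
  ∀ ε : ℕ → ℝ, (∀ n, 0 < ε n) →
    ∃ U : ℕ → Set X, (∀ x, ∃ n, x ∈ U n) ∧ ∀ n, EMetric.diam (U n) ≤ ENNReal.ofReal (ε n)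

/-!
Given `c > 0` and a target mesh `δ > 0`, split `c` as `∑ ηₙ` with `ηₙ > 0` and use the
continuity of the gauge at `0` to pick radii `εₙ < δ` with `h εₙ < ηₙ`. A strong measure zero
cover by sets of diameter `≤ εₙ` is a `δ`-cover of `h`-mass at most `c`, by monotonicity of `h`.
-/

open Topology Metric

namespace SMZ

variable {X : Type*} [MetricSpace X]

theorem exists_cover_ediam_le (hX : SMZ X) {ε : ℕ → ℝ≥0∞} (hε : ∀ n, 0 < ε n) :
    ∃ U : ℕ → Set X, univ ⊆ ⋃ n, U n ∧ ∀ n, ediam (U n) ≤ ε n := by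
  -- truncating at `1` keeps the radii finite, so `toReal` does not send them to `0`
  obtain ⟨U, hU, hUε⟩ := hX (fun n => (min (ε n) 1).toReal)
    fun n => toReal_pos (lt_min (hε n) one_pos).ne' (min_lt_of_right_lt one_lt_top).ne
  refine ⟨U, fun x _ => mem_iUnion.2 (hU x), fun n => (hUε n).trans ?_⟩
  rw [ofReal_toReal (min_lt_of_right_lt one_lt_top).ne]
  exact min_le_left _ _

theorem exists_cover_tsum_le (hX : SMZ X) {m : ℝ≥0∞ → ℝ≥0∞} (hm : MonotoneOn m (Iio ∞))
    (hm0 : Tendsto m (𝓝[>] 0) (𝓝 0)) {δ c : ℝ≥0∞} (hδ : 0 < δ) (hc : 0 < c) :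
    ∃ U : ℕ → Set X, univ ⊆ ⋃ n, U n ∧ (∀ n, ediam (U n) ≤ δ) ∧
      ∑' n, m (ediam (U n)) ≤ c := by
  obtain ⟨η, hη, hηc⟩ := ENNReal.exists_pos_sum_of_countable hc.ne' ℕ
  have radii : ∀ n, ∃ s, 0 < s ∧ s < min δ 1 ∧ m s < η n := fun n =>
    (eventually_mem_nhdsWithin.and <| (eventually_nhdsWithin_of_eventually_nhds
      (eventually_lt_nhds (lt_min hδ one_pos))).and
        (hm0.eventually (eventually_lt_nhds (coe_pos.2 (hη n))))).exists
  choose s hs0 hsδ hsm using radii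
  obtain ⟨U, hU, hUs⟩ := hX.exists_cover_ediam_le hs0
  have hs_lt_top : ∀ n, s n < ∞ := fun n =>
    ((hsδ n).trans_le (min_le_right _ _)).trans one_lt_top
  refine ⟨U, hU, fun n => (hUs n).trans ((hsδ n).le.trans (min_le_left _ _)), ?_⟩
  calc ∑' n, m (ediam (U n)) ≤ ∑' n, (η n : ℝ≥0∞) := ENNReal.tsum_le_tsum fun n =>
        (hm ((hUs n).trans_lt (hs_lt_top n)) (hs_lt_top n) (hUs n)).trans (hsm n).le
    _ ≤ c := hηc.le

theorem mkMetric_univ_eq_zero [MeasurableSpace X] [BorelSpace X] (hX : SMZ X)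
    {m : ℝ≥0∞ → ℝ≥0∞} (hm : MonotoneOn m (Iio ∞)) (hm0 : Tendsto m (𝓝[>] 0) (𝓝 0)) :
    Measure.mkMetric m (univ : Set X) = 0 := by
  have hpos : ∀ n : ℕ, 0 < (n : ℝ≥0∞)⁻¹ := fun n => ENNReal.inv_pos.2 (natCast_ne_top n)
  choose U hU hUdiam hUsum using fun n => hX.exists_cover_tsum_le hm hm0 (hpos n) (hpos n)
  refine nonpos_iff_eq_zero.1 ?_
  calc Measure.mkMetric m univ ≤ liminf (fun n => ∑' i, m (ediam (U n i))) atTop :=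
        Measure.mkMetric_le_liminf_tsum _ _ ENNReal.tendsto_inv_nat_nhds_zero U
          (.of_forall hUdiam) (.of_forall hU) m
    _ ≤ liminf (fun n : ℕ => (n : ℝ≥0∞)⁻¹) atTop := liminf_le_liminf (.of_forall hUsum)
    _ = 0 := ENNReal.tendsto_inv_nat_nhds_zero.liminf_eq

end SMZ

theorem MonotoneOn.ofReal_comp_toReal {f : ℝ → ℝ} (hf : MonotoneOn f (Ici 0)) :
    MonotoneOn (fun r : ℝ≥0∞ => ENNReal.ofReal (f r.toReal)) (Iio ∞) := fun _ _ _ hb hab =>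
  ofReal_le_ofReal (hf toReal_nonneg toReal_nonneg (toReal_mono hb.ne hab))

theorem ContinuousWithinAt.tendsto_ofReal_comp_toReal {f : ℝ → ℝ}
    (hf : ContinuousWithinAt f (Ici 0) 0) (hf0 : f 0 = 0) :
    Tendsto (fun r : ℝ≥0∞ => ENNReal.ofReal (f r.toReal)) (𝓝[>] 0) (𝓝 0) := by
  have htoReal : Tendsto ENNReal.toReal (𝓝[>] 0) (𝓝[≥] 0) :=
    tendsto_nhdsWithin_of_tendsto_nhds_of_eventually_within _
      ((ENNReal.tendsto_toReal zero_ne_top).mono_left nhdsWithin_le_nhds)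
      (.of_forall fun _ => toReal_nonneg)
  simpa only [hf0, ofReal_zero, Function.comp_def] using
    (ENNReal.tendsto_ofReal hf.tendsto).comp htoReal

/-- If a metric space has strong measure zero, then every gauged Hausdorff measure of it
vanishes. -/
theorem stmt0 {X : Type*} [MetricSpace X] [MeasurableSpace X] [BorelSpace X]
    (hX : SMZ X) (h : ℝ → ℝ) (hh : IsHausdorffFn h) :
    hMeas h (Set.univ : Set X) = 0 :=
  hX.mkMetric_univ_eq_zero hh.2.1.ofReal_comp_toReal
    ((hh.2.2.1 0 le_rfl).tendsto_ofReal_comp_toReal ((hh.2.2.2 0 le_rfl).2 rfl))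
end

section
/- If for every Hausdorff function h the h-dimensional Hausdorff measure of a metric space X is finite, then X has strong measure zero. -/
open Set Filter MeasureTheory ENNReal

/-!
Given `ε`, pass to an antitone `e ≤ ε` tending to `0` and take the step gauge `g` equal to
`1 / (L + 1)` on the band `[e (2 ^ (L + 3)), e (2 ^ (L + 2)))`. As `H^g(X) < ∞`, a cover of `X` by
small sets has `g`-sum at most some finite `a`, so it has at most `a (L + 1) ≤ 2 ^ L` members in
band `L` (for `L` large, which smallness of the sets guarantees). These fit injectively into the
even indices `2 n`, `2 ^ L ≤ n < 2 ^ (L + 1)`, at all of which `ε ≥ e (2 ^ (L + 2))`; sets of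
diameter zero take the odd indices.
-/

open Topology Function

lemma exists_antitone_tendsto_zero_le {ε : ℕ → ℝ} (hε : ∀ n, 0 < ε n) :
    ∃ e : ℕ → ℝ, (∀ n, 0 < e n) ∧ Antitone e ∧ Tendsto e atTop (𝓝 0) ∧ ∀ n, e n ≤ ε n := by
  set f : ℕ → ℝ := fun k => min (ε k) (2⁻¹ ^ k)
  set e : ℕ → ℝ := fun n => (Finset.range (n + 1)).inf' Finset.nonempty_range_add_one f
  have he_pos : ∀ n, 0 < e n := fun n =>
    (Finset.lt_inf'_iff _).2 fun k _ => lt_min (hε k) (by positivity)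
  have he_le : ∀ n, e n ≤ f n := fun n => Finset.inf'_le f (Finset.self_mem_range_succ n)
  refine ⟨e, he_pos, fun m n hmn => Finset.inf'_mono f (Finset.range_subset_range.2 (by omega)) _,
    ?_, fun n => (he_le n).trans (min_le_left _ _)⟩
  exact squeeze_zero (fun n => (he_pos n).le) (fun n => (he_le n).trans (min_le_right _ _))
    (tendsto_pow_atTop_nhds_zero_of_lt_one (by norm_num) (by norm_num))

lemma eventually_mul_succ_le_two_pow {a : ℝ≥0∞} (ha : a ≠ ⊤) :
    ∀ᶠ L : ℕ in atTop, a * (L + 1) ≤ 2 ^ L := by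
  have hlim := (tendsto_pow_const_div_const_pow_of_one_lt 1 one_lt_two).comp
    (tendsto_add_atTop_nat 1)
  have hpos : (0 : ℝ) < (2 * (a.toReal + 1))⁻¹ := by positivity
  filter_upwards [hlim.eventually (gt_mem_nhds hpos)] with L hL
  have hL' : 2 * (a.toReal + 1) * ((L : ℝ) + 1) < 2 ^ (L + 1) := by
    simp only [comp_apply, Nat.cast_add, Nat.cast_one, pow_one] at hL
    rwa [div_lt_iff₀ (by positivity), lt_inv_mul_iff₀ (by positivity)] at hL
  have hreal : a.toReal * (L + 1) ≤ 2 ^ L := by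
    rw [pow_succ] at hL'; nlinarith [ENNReal.toReal_nonneg (a := a)]
  calc a * (L + 1) = ENNReal.ofReal (a.toReal * (L + 1)) := by
        rw [ENNReal.ofReal_mul ENNReal.toReal_nonneg, ENNReal.ofReal_toReal ha]
        norm_cast
    _ ≤ ENNReal.ofReal (2 ^ L) := ENNReal.ofReal_le_ofReal hreal
    _ = 2 ^ L := by rw [ENNReal.ofReal_pow zero_le_two, ENNReal.ofReal_ofNat]

noncomputable def scaleIndex (s : ℕ → ℝ) (r : ℝ) : ℕ := sInf {i | s i ≤ r}

noncomputable def stepGauge (s : ℕ → ℝ) (r : ℝ) : ℝ :=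
  if r ≤ 0 then 0 else ((scaleIndex s r : ℝ) + 1)⁻¹

section StepGauge

variable {s : ℕ → ℝ} {r t : ℝ} {i : ℕ}

lemma lt_of_lt_scaleIndex (h : i < scaleIndex s r) : r < s i :=
  not_le.1 (Nat.notMem_of_lt_sInf h)

lemma scaleIndex_le_iff (hs : Antitone s) (hs0 : Tendsto s atTop (𝓝 0)) (hr : 0 < r) :
    scaleIndex s r ≤ i ↔ s i ≤ r := by
  have hne : {i | s i ≤ r}.Nonempty := ((hs0.eventually (ge_mem_nhds hr)).exists)
  exact ⟨fun h => (hs h).trans (Nat.sInf_mem hne), fun h => Nat.sInf_le h⟩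

lemma lt_scaleIndex_iff (hs : Antitone s) (hs0 : Tendsto s atTop (𝓝 0)) (hr : 0 < r) :
    i < scaleIndex s r ↔ r < s i := by
  simpa only [not_le] using (scaleIndex_le_iff hs hs0 hr).not

lemma scaleIndex_le_scaleIndex (hs : Antitone s) (hs0 : Tendsto s atTop (𝓝 0)) (hr : 0 < r)
    (hrt : r ≤ t) : scaleIndex s t ≤ scaleIndex s r :=
  (scaleIndex_le_iff hs hs0 (hr.trans_le hrt)).2
    (((scaleIndex_le_iff hs hs0 hr).1 le_rfl).trans hrt)

lemma eventually_scaleIndex_eq (hs : Antitone s) (hs0 : Tendsto s atTop (𝓝 0)) (hr : 0 < r) :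
    ∀ᶠ t in 𝓝[≥] r, scaleIndex s t = scaleIndex s r := by
  rcases hJ : scaleIndex s r with _ | i
  · filter_upwards [self_mem_nhdsWithin] with t hrt
    exact Nat.le_zero.1 (hJ ▸ scaleIndex_le_scaleIndex hs hs0 hr hrt)
  · have hri : r < s i := lt_of_lt_scaleIndex (hJ ▸ Nat.lt_succ_self i)
    filter_upwards [Ico_mem_nhdsGE hri] with t ⟨hrt, hts⟩
    exact le_antisymm (hJ ▸ scaleIndex_le_scaleIndex hs hs0 hr hrt)
      ((lt_scaleIndex_iff hs hs0 (hr.trans_le hrt)).2 hts)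

lemma stepGauge_of_nonpos (hr : r ≤ 0) : stepGauge s r = 0 := if_pos hr

lemma stepGauge_of_pos (hr : 0 < r) : stepGauge s r = ((scaleIndex s r : ℝ) + 1)⁻¹ :=
  if_neg hr.not_ge

lemma stepGauge_nonneg : 0 ≤ stepGauge s r := by
  unfold stepGauge; split_ifs <;> positivity

lemma monotoneOn_stepGauge (hs : Antitone s) (hs0 : Tendsto s atTop (𝓝 0)) :
    MonotoneOn (stepGauge s) (Ici 0) := by
  intro r _ t _ hrt
  rcases le_or_gt r 0 with hr | hr
  · exact (stepGauge_of_nonpos hr).trans_le stepGauge_nonneg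
  rw [stepGauge_of_pos hr, stepGauge_of_pos (hr.trans_le hrt)]
  gcongr
  exact scaleIndex_le_scaleIndex hs hs0 hr hrt

lemma tendsto_stepGauge_nhdsGE_zero (hs : Antitone s) (hs0 : Tendsto s atTop (𝓝 0))
    (hs_pos : ∀ i, 0 < s i) :
    Tendsto (stepGauge s) (𝓝[≥] 0) (𝓝 0) := by
  refine tendsto_order.2 ⟨fun b hb => Eventually.of_forall fun t => hb.trans_le stepGauge_nonneg,
    fun b hb => ?_⟩
  obtain ⟨m, hm⟩ := exists_nat_one_div_lt hb
  filter_upwards [Ico_mem_nhdsGE (hs_pos m)] with t ht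
  rcases le_or_gt t 0 with ht0 | ht0
  · rwa [stepGauge_of_nonpos ht0]
  have hmt : m < scaleIndex s t := (lt_scaleIndex_iff hs hs0 ht0).2 ht.2
  rw [stepGauge_of_pos ht0]
  refine lt_of_le_of_lt ?_ hm
  rw [one_div]
  gcongr

lemma continuousWithinAt_stepGauge (hs : Antitone s) (hs0 : Tendsto s atTop (𝓝 0))
    (hs_pos : ∀ i, 0 < s i) (hr : 0 ≤ r) : ContinuousWithinAt (stepGauge s) (Ici r) r := by
  rcases hr.eq_or_lt with rfl | hr
  · rw [ContinuousWithinAt, stepGauge_of_nonpos le_rfl]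
    exact tendsto_stepGauge_nhdsGE_zero hs hs0 hs_pos
  refine tendsto_const_nhds.congr' ?_
  filter_upwards [self_mem_nhdsWithin, eventually_scaleIndex_eq hs hs0 hr] with t hrt ht
  rw [stepGauge_of_pos hr, stepGauge_of_pos (hr.trans_le hrt), ht]

lemma isHausdorffFn_stepGauge (hs : Antitone s) (hs0 : Tendsto s atTop (𝓝 0))
    (hs_pos : ∀ i, 0 < s i) : IsHausdorffFn (stepGauge s) := by
  refine ⟨fun r _ => stepGauge_nonneg, monotoneOn_stepGauge hs hs0,
    fun r hr => continuousWithinAt_stepGauge hs hs0 hs_pos hr, fun r hr => ⟨fun h => ?_, ?_⟩⟩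
  · by_contra hr0
    rw [stepGauge_of_pos (hr.lt_of_ne' hr0)] at h
    exact absurd h (by positivity)
  · rintro rfl
    exact stepGauge_of_nonpos le_rfl

end StepGauge

lemma exists_cover_tsum_lt_of_mkMetric_lt {X : Type*} [EMetricSpace X] [MeasurableSpace X]
    [BorelSpace X] {m : ℝ≥0∞ → ℝ≥0∞} (hm : m 0 = 0) {s : Set X} {c r : ℝ≥0∞}
    (hc : Measure.mkMetric m s < c) (hr : 0 < r) :
    ∃ t : ℕ → Set X, s ⊆ ⋃ n, t n ∧ (∀ n, Metric.ediam (t n) ≤ r) ∧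
      ∑' n, m (Metric.ediam (t n)) < c := by
  rw [Measure.mkMetric_apply] at hc
  obtain ⟨t, hst, htr, hsum⟩ : ∃ t : ℕ → Set X, s ⊆ ⋃ n, t n ∧ (∀ n, Metric.ediam (t n) ≤ r) ∧
      ∑' n, ⨆ _ : (t n).Nonempty, m (Metric.ediam (t n)) < c := by
    simpa only [iInf_lt_iff, exists_prop] using lt_of_le_of_lt (le_iSup₂ (α := ℝ≥0∞) r hr) hc
  refine ⟨t, hst, htr, lt_of_eq_of_lt (tsum_congr fun n => ?_) hsum⟩
  rcases (t n).eq_empty_or_nonempty with ht | ht <;> simp [ht, hm]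

lemma encard_mul_le_tsum {ι : Type*} {w : ι → ℝ≥0∞} {S : Set ι} {c : ℝ≥0∞}
    (h : ∀ i ∈ S, c ≤ w i) : (S.encard : ℝ≥0∞) * c ≤ ∑' i, w i := by
  rw [← ENNReal.tsum_set_const]
  calc ∑' _ : S, c ≤ ∑' i : S, w i := ENNReal.tsum_le_tsum fun i => h i i.2
    _ ≤ ∑' i, w i := ENNReal.tsum_comp_le_tsum_of_injective Subtype.val_injective w

lemma exists_injOn_lt_two_pow {ι : Type*} {S : Set ι} (ℓ : ι → ℕ)
    (h : ∀ j, {i ∈ S | ℓ i = j}.encard ≤ 2 ^ j) :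
    ∃ φ : ι → ℕ, InjOn φ S ∧ ∀ i ∈ S, φ i < 2 ^ (ℓ i + 1) := by
  have hblock : ∀ j, ∃ f : ι → ℕ, {i ∈ S | ℓ i = j} ⊆ f ⁻¹' Ico (2 ^ j) (2 ^ (j + 1)) ∧
      InjOn f {i ∈ S | ℓ i = j} := fun j =>
    Finite.exists_injOn_of_encard_le (finite_of_encard_le_coe (h j)) <| by
      rw [← Finset.coe_Ico, encard_coe_eq_coe_finsetCard, Nat.card_Ico, pow_succ, mul_two,
        Nat.add_sub_cancel]
      exact_mod_cast h j
  choose f hf_maps hf_inj using hblock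
  have hmem : ∀ i ∈ S, f (ℓ i) i ∈ Ico (2 ^ ℓ i) (2 ^ (ℓ i + 1)) := fun i hi =>
    hf_maps (ℓ i) ⟨hi, rfl⟩
  refine ⟨fun i => f (ℓ i) i, fun i hi i' hi' heq => ?_, fun i hi => (hmem i hi).2⟩
  have hℓ : ℓ i' = ℓ i := by
    rw [← Nat.log_eq_of_pow_le_of_lt_pow (hmem i hi).1 (hmem i hi).2,
      ← Nat.log_eq_of_pow_le_of_lt_pow (hmem i' hi').1 (hmem i' hi').2]
    exact congrArg (Nat.log 2) heq.symm
  exact hf_inj (ℓ i) ⟨hi, rfl⟩ ⟨hi', hℓ⟩ (by simpa only [hℓ] using heq)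

lemma injective_ite_of_injOn {S : Set ℕ} [DecidablePred (· ∈ S)] {φ : ℕ → ℕ} (hφ : InjOn φ S) :
    Injective fun k => if k ∈ S then 2 * φ k else 2 * k + 1 := by
  intro k k' h
  by_cases hk : k ∈ S <;> by_cases hk' : k' ∈ S <;> simp only [hk, hk', if_true, if_false] at h
  · exact hφ hk hk' (by omega)
  all_goals omega

lemma exists_cover_ediam_le_of_injective {X : Type*} [PseudoEMetricSpace X] {V : ℕ → Set X}
    (hV : ∀ x, ∃ k, x ∈ V k) {σ : ℕ → ℕ} (hσ : Injective σ) {d : ℕ → ℝ≥0∞}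
    (hd : ∀ k, Metric.ediam (V k) ≤ d (σ k)) :
    ∃ U : ℕ → Set X, (∀ x, ∃ n, x ∈ U n) ∧ ∀ n, Metric.ediam (U n) ≤ d n := by
  refine ⟨extend σ V fun _ => ∅, fun x => ?_, fun n => ?_⟩
  · obtain ⟨k, hk⟩ := hV x
    exact ⟨σ k, by rwa [hσ.extend_apply]⟩
  · by_cases hn : ∃ k, σ k = n
    · obtain ⟨k, rfl⟩ := hn
      rw [hσ.extend_apply]
      exact hd k
    · rw [extend_apply' _ _ _ hn, Metric.ediam_empty]
      exact zero_le

lemma exists_injective_le_of_tsum_stepGauge_le {s e : ℕ → ℝ} (hs : Antitone s)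
    (hs0 : Tendsto s atTop (𝓝 0)) (hse : ∀ i n, n ≤ 2 ^ (i + 3) → s i ≤ e n)
    (he : ∀ n, 0 ≤ e n) {d : ℕ → ℝ} {a : ℝ≥0∞} {L₀ : ℕ} (ha : ∀ L ≥ L₀, a * (L + 1) ≤ 2 ^ L)
    (hd : ∀ k, d k < s L₀) (hsum : ∑' k, ENNReal.ofReal (stepGauge s (d k)) ≤ a) :
    ∃ σ : ℕ → ℕ, Injective σ ∧ ∀ k, d k ≤ e (σ k) := by
  classical
  set S : Set ℕ := {k | 0 < d k}
  set ℓ : ℕ → ℕ := fun k => scaleIndex s (d k)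
  have hℓ : ∀ k ∈ S, L₀ < ℓ k := fun k hk => (lt_scaleIndex_iff hs hs0 hk).2 (hd k)
  have hcount : ∀ j, {k ∈ S | ℓ k = j}.encard ≤ 2 ^ j := by
    intro j
    rcases eq_empty_or_nonempty {k ∈ S | ℓ k = j} with hj | ⟨k, hk, rfl⟩
    · simp [hj]
    have hle : ({k' ∈ S | ℓ k' = ℓ k}.encard : ℝ≥0∞) * ((ℓ k : ℝ≥0∞) + 1)⁻¹ ≤ a := by
      refine (encard_mul_le_tsum fun k' hk' => ?_).trans hsum
      rw [stepGauge_of_pos hk'.1, ← hk'.2, ENNReal.ofReal_inv_of_pos (by positivity)]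
      norm_cast
    rw [← ENNReal.le_div_iff_mul_le (by simp) (by simp), div_eq_mul_inv, inv_inv] at hle
    exact_mod_cast hle.trans (ha _ (hℓ k hk).le)
  obtain ⟨φ, hφ, hφℓ⟩ := exists_injOn_lt_two_pow ℓ hcount
  refine ⟨_, injective_ite_of_injOn hφ, fun k => ?_⟩
  by_cases hk : k ∈ S
  · obtain ⟨j, hj⟩ := Nat.exists_eq_add_one_of_ne_zero ((Nat.zero_le L₀).trans_lt (hℓ k hk)).ne'
    have hφk : 2 * φ k ≤ 2 ^ (j + 3) :=
      calc 2 * φ k ≤ 2 * 2 ^ (ℓ k + 1) := by linarith [hφℓ k hk]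
        _ = 2 ^ (j + 3) := by rw [hj]; ring
    simp only [hk, if_true]
    exact (lt_of_lt_scaleIndex (show j < ℓ k by omega)).le.trans (hse j _ hφk)
  · simp only [hk, if_false]
    exact (not_lt.1 hk).trans (he _)

/-- If every gauged Hausdorff measure of `X` is finite, then `X` has strong measure zero. -/
theorem stmt1 {X : Type*} [MetricSpace X] [MeasurableSpace X] [BorelSpace X]
    (hfin : ∀ h : ℝ → ℝ, IsHausdorffFn h → hMeas h (Set.univ : Set X) < ⊤) :
    SMZ X := by
  intro ε hε
  obtain ⟨e, he_pos, he, he0, heε⟩ := exists_antitone_tendsto_zero_le hε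
  have hpow : StrictMono fun i : ℕ => 2 ^ (i + 3) := fun i j hij =>
    Nat.pow_lt_pow_right one_lt_two (by omega)
  set s : ℕ → ℝ := fun i => e (2 ^ (i + 3))
  have hs : Antitone s := he.comp_monotone hpow.monotone
  have hs0 : Tendsto s atTop (𝓝 0) := he0.comp hpow.tendsto_atTop
  have hfin_s := hfin _ (isHausdorffFn_stepGauge hs hs0 fun i => he_pos _)
  set a := hMeas (stepGauge s) (univ : Set X) + 1
  obtain ⟨L₀, hL₀⟩ := (eventually_mul_succ_le_two_pow (a := a)
    (ENNReal.add_ne_top.2 ⟨hfin_s.ne, one_ne_top⟩)).exists_forall_of_atTop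
  obtain ⟨V, hV, hVdiam, hVsum⟩ := exists_cover_tsum_lt_of_mkMetric_lt
    (by simp [stepGauge_of_nonpos]) (ENNReal.lt_add_right hfin_s.ne one_ne_zero)
    (ENNReal.ofReal_pos.2 (half_pos (he_pos (2 ^ (L₀ + 3)))))
  have hVtop : ∀ k, Metric.ediam (V k) ≠ ⊤ := fun k =>
    ne_top_of_le_ne_top ofReal_ne_top (hVdiam k)
  obtain ⟨σ, hσ, hσd⟩ := exists_injective_le_of_tsum_stepGauge_le hs hs0
    (fun i n hn => he hn) (fun n => (he_pos n).le) hL₀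
    (fun k => (ENNReal.toReal_le_of_le_ofReal (half_pos (he_pos _)).le (hVdiam k)).trans_lt
      (half_lt_self (he_pos _))) hVsum.le
  refine exists_cover_ediam_le_of_injective (fun x => mem_iUnion.1 (hV (mem_univ x))) hσ
    fun k => ?_
  rw [← ENNReal.ofReal_toReal (hVtop k)]
  exact ENNReal.ofReal_le_ofReal ((hσd k).trans (heε _))
end

section
/- A subset E of a metric space satisfies H^h(E) = 0 if and only if E admits a countable λ-cover {E_n} with Σ_n h(diam E_n) < ∞. -/
open Set Filter MeasureTheory ENNReal

/-! If `H^h(E) = 0`, choose for each `k` a cover of `E` with `Σ h(diam) < 2⁻ᵏ`; together these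
covers form a λ-cover with finite sum. Conversely, a finite sum forces `diam Eₙ → 0`, and since
every point of `E` lies in infinitely many `Eₙ`, each tail `(E_{n+k})ₙ` still covers `E`: the
tails are covers of mesh tending to `0` whose sums tend to `0`. -/

open Topology Metric

section LambdaCover

variable {α ι κ : Type*}

def IsLambdaCover (U : ι → Set α) (s : Set α) : Prop :=
  ∀ x ∈ s, {i | x ∈ U i}.Infinite

namespace IsLambdaCover

variable {s : Set α}

theorem of_forall_subset_iUnion {t : ℕ → ι → Set α} (ht : ∀ k, s ⊆ ⋃ i, t k i) :
    IsLambdaCover (fun p : ℕ × ι => t p.1 p.2) s := by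
  intro x hx hfin
  refine infinite_univ ((hfin.image Prod.fst).subset fun k _ => ?_)
  obtain ⟨i, hi⟩ := mem_iUnion.1 (ht k hx)
  exact ⟨(k, i), hi, rfl⟩

theorem comp_equiv {U : ι → Set α} (hU : IsLambdaCover U s) (e : κ ≃ ι) :
    IsLambdaCover (U ∘ e) s :=
  fun x hx => (hU x hx).preimage (e.surjective.range_eq ▸ subset_univ _)

theorem subset_iUnion_add {U : ℕ → Set α} (hU : IsLambdaCover U s) (k : ℕ) :
    s ⊆ ⋃ i, U (i + k) := by
  intro x hx
  obtain ⟨n, hn, hkn⟩ := (hU x hx).exists_gt k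
  exact mem_iUnion.2 ⟨n - k, by rwa [Nat.sub_add_cancel hkn.le]⟩

end IsLambdaCover

end LambdaCover

theorem ENNReal.tendsto_iSup_nat_add_atTop_zero {f : ℕ → ℝ≥0∞}
    (hf : Tendsto f atTop (𝓝 0)) : Tendsto (fun k => ⨆ i, f (i + k)) atTop (𝓝 0) := by
  rw [ENNReal.tendsto_atTop_zero] at hf ⊢
  intro ε hε
  obtain ⟨N, hN⟩ := hf ε hε
  exact ⟨N, fun k hk => iSup_le fun i => hN _ (le_add_left hk)⟩

namespace MeasureTheory.Measure

variable {X : Type*} [EMetricSpace X] [MeasurableSpace X] [BorelSpace X] {m : ℝ≥0∞ → ℝ≥0∞}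
  {s : Set X}

theorem exists_cover_tsum_lt_of_mkMetric_eq_zero (hm : m 0 = 0) (hs : mkMetric m s = 0)
    {r ε : ℝ≥0∞} (hr : 0 < r) (hε : 0 < ε) :
    ∃ t : ℕ → Set X, s ⊆ ⋃ n, t n ∧ (∀ n, ediam (t n) ≤ r) ∧ ∑' n, m (ediam (t n)) < ε := by
  rw [mkMetric_apply, ← ENNReal.bot_eq_zero, iSup₂_eq_bot] at hs
  have hinf := lt_of_eq_of_lt (hs r hr) hε
  simp only [iInf_lt_iff] at hinf
  obtain ⟨t, hst, htr, hsum⟩ := hinf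
  refine ⟨t, hst, htr, lt_of_le_of_lt (ENNReal.tsum_le_tsum fun n => ?_) hsum⟩
  rcases (t n).eq_empty_or_nonempty with htn | htn
  · simp [htn, hm]
  · exact le_iSup (fun _ => m (ediam (t n))) htn

theorem exists_isLambdaCover_of_mkMetric_eq_zero (hm : m 0 = 0) (hs : mkMetric m s = 0)
    {r : ℝ≥0∞} (hr : 0 < r) :
    ∃ U : ℕ → Set X, IsLambdaCover U s ∧ (∀ n, ediam (U n) ≤ r) ∧
      ∑' n, m (ediam (U n)) ≠ ∞ := by
  choose t hst htr hsum using fun k : ℕ =>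
    exists_cover_tsum_lt_of_mkMetric_eq_zero hm hs hr (ENNReal.pow_pos (a := 2⁻¹) (by simp) k)
  refine ⟨fun j => t (Nat.pairEquiv.symm j).1 (Nat.pairEquiv.symm j).2,
    (IsLambdaCover.of_forall_subset_iUnion hst).comp_equiv _, fun j => htr _ _, ?_⟩
  refine ne_top_of_le_ne_top (b := ∑' k : ℕ, (2⁻¹ : ℝ≥0∞) ^ k)
    (by simp [ENNReal.tsum_geometric]) ?_
  calc ∑' j, m (ediam (t (Nat.pairEquiv.symm j).1 (Nat.pairEquiv.symm j).2))
      = ∑' k, ∑' n, m (ediam (t k n)) :=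
        (Nat.pairEquiv.symm.tsum_eq fun p => m (ediam (t p.1 p.2))).trans
          (ENNReal.tsum_prod (f := fun k n => m (ediam (t k n))))
    _ ≤ ∑' k : ℕ, 2⁻¹ ^ k := ENNReal.tsum_le_tsum fun k => (hsum k).le

theorem _root_.IsLambdaCover.mkMetric_eq_zero {U : ℕ → Set X} (hU : IsLambdaCover U s)
    (hdiam : Tendsto (fun n => ediam (U n)) atTop (𝓝 0)) (hsum : ∑' n, m (ediam (U n)) ≠ ∞) :
    mkMetric m s = 0 := by
  refine nonpos_iff_eq_zero.1 ?_
  calc mkMetric m s ≤ liminf (fun k => ∑' i, m (ediam (U (i + k)))) atTop :=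
        mkMetric_le_liminf_tsum s _ (ENNReal.tendsto_iSup_nat_add_atTop_zero hdiam)
          (fun k i => U (i + k))
          (Eventually.of_forall fun k i => le_iSup (fun i => ediam (U (i + k))) i)
          (Eventually.of_forall hU.subset_iUnion_add) m
    _ = 0 := (ENNReal.tendsto_sum_nat_add _ hsum).liminf_eq

end MeasureTheory.Measure

namespace IsHausdorffFn

variable {h : ℝ → ℝ}

theorem map_zero (hh : IsHausdorffFn h) : h 0 = 0 :=
  (hh.2.2.2 0 le_rfl).2 rfl

theorem pos (hh : IsHausdorffFn h) {r : ℝ} (hr : 0 < r) : 0 < h r :=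
  (hh.1 r hr.le).lt_of_ne fun h0 => hr.ne' ((hh.2.2.2 r hr.le).1 h0.symm)

theorem tendsto_zero_of_tendsto_ofReal (hh : IsHausdorffFn h) {α : Type*} {l : Filter α}
    {f : α → ℝ} (hf : ∀ a, 0 ≤ f a) (hlim : Tendsto (fun a => ENNReal.ofReal (h (f a))) l (𝓝 0)) :
    Tendsto f l (𝓝 0) := by
  refine tendsto_order.2 ⟨fun c hc => Eventually.of_forall fun a => hc.trans_le (hf a),
    fun c hc => ?_⟩
  filter_upwards [hlim.eventually (gt_mem_nhds (ENNReal.ofReal_pos.2 (hh.pos hc)))] with a ha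
  by_contra! hca
  exact ha.not_ge (ENNReal.ofReal_le_ofReal (hh.2.1 hc.le (hc.le.trans hca) hca))

end IsHausdorffFn

/-- `H^h(E) = 0` iff `E` has a countable `λ`-cover (every point of `E` lies in infinitely
many of the sets) with finite Hausdorff sum `Σ h(diam Eₙ)`. -/
theorem stmt3 {X : Type*} [MetricSpace X] [MeasurableSpace X] [BorelSpace X]
    (h : ℝ → ℝ) (hh : IsHausdorffFn h) (E : Set X) :
    hMeas h E = 0 ↔
      ∃ U : ℕ → Set X,
        (∀ x ∈ E, {n | x ∈ U n}.Infinite) ∧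
        (∀ n, Bornology.IsBounded (U n)) ∧
        ∑' n, ENNReal.ofReal (h (Metric.diam (U n))) < ⊤ := by
  have hm0 : ENNReal.ofReal (h (0 : ℝ≥0∞).toReal) = 0 := by simp [hh.map_zero]
  constructor
  · intro hE
    obtain ⟨U, hU, hdiam, hsum⟩ := Measure.exists_isLambdaCover_of_mkMetric_eq_zero hm0 hE one_pos
    exact ⟨U, hU, fun n => isBounded_iff_ediam_ne_top.2 (ne_top_of_le_ne_top one_ne_top (hdiam n)),
      hsum.lt_top⟩
  · rintro ⟨U, hU, hbdd, hsum⟩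
    have hdiam : Tendsto (fun n => diam (U n)) atTop (𝓝 0) :=
      hh.tendsto_zero_of_tendsto_ofReal (fun _ => diam_nonneg)
        (ENNReal.tendsto_atTop_zero_of_tsum_ne_top hsum.ne)
    have hediam : Tendsto (fun n => ediam (U n)) atTop (𝓝 0) := by
      simpa only [diam, ENNReal.ofReal_toReal (hbdd _).ediam_ne_top, ENNReal.ofReal_zero] using
        ENNReal.tendsto_ofReal hdiam
    exact IsLambdaCover.mkMetric_eq_zero hU hediam hsum.ne
end

section
/- In the Cantor space 2^ℕ with the metric d(x,y) = 2^{-n(x,y)} where n(x,y) is the least index at which x and y differ, the 1-dimensional Hausdorff measure of the whole space equals 1 and coincides on Borel sets with the standard product (coin-flipping) measure. -/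
open Set Filter MeasureTheory ENNReal

/-- Cantor space `2^ℕ` with the metric `d(x,y) = 2^{-min{i : x i ≠ y i}}`. -/
noncomputable instance : MetricSpace (ℕ → Bool) :=
  PiNat.metricSpaceOfDiscreteUniformity fun _ => rfl

/-!
If `s ⊆ 2^ℕ` has at least two points and `n` is the least index at which two of them differ,
then `s` lies in a cylinder of length `n` and has diameter `2^{-n}`. Hence every measure giving the
cylinders of length `n` measure `2^{-n}` satisfies `μ s ≤ diam s` for all `s`, i.e. `μ ≤ H^1`.
Conversely, covering `2^ℕ` by its `2^m` cylinders of length `m` gives `H^1(2^ℕ) ≤ 1`. Since such a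
measure exists (the product of uniform measures on `Bool`), `H^1(2^ℕ) = 1`, and a finite measure
below `H^1` with the same total mass equals `H^1`.
-/

open Measure ProbabilityTheory Topology

lemma hMeas_id_eq_hausdorffMeasure_one {X : Type*} [EMetricSpace X] [MeasurableSpace X]
    [BorelSpace X] : (hMeas (fun r => r) : Measure X) = μH[1] := by
  have hgauge : (fun r : ℝ≥0∞ => ENNReal.ofReal r.toReal) =ᶠ[𝓝 0] fun r => r ^ (1 : ℝ) := by
    filter_upwards [eventually_lt_nhds zero_lt_one] with r hr
    rw [ofReal_toReal (hr.trans one_lt_top).ne, rpow_one]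
  exact le_antisymm (mkMetric_mono hgauge.le) (mkMetric_mono hgauge.symm.le)

namespace Cantor

def IsCoinFlipping (μ : Measure (ℕ → Bool)) : Prop :=
  ∀ (n : ℕ) (p : Fin n → Bool), μ {x | ∀ i : Fin n, x i = p i} = 1 / 2 ^ n

lemma cylinder_eq_setOf_fin (z : ℕ → Bool) (n : ℕ) :
    PiNat.cylinder z n = {x | ∀ i : Fin n, x i = z i} := by
  ext x
  simp only [PiNat.mem_cylinder_iff, mem_ofPred_eq]
  exact ⟨fun h i => h i i.2, fun h i hi => h ⟨i, hi⟩⟩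

lemma ofReal_one_half_pow (n : ℕ) : ENNReal.ofReal ((1 / 2 : ℝ) ^ n) = 2⁻¹ ^ n := by
  rw [ofReal_pow (by norm_num), one_div, ofReal_inv_of_pos two_pos, ofReal_ofNat]

lemma edist_eq_of_ne {x y : ℕ → Bool} (h : x ≠ y) : edist x y = 2⁻¹ ^ PiNat.firstDiff x y := by
  rw [edist_dist, PiNat.dist_eq_of_ne h, ofReal_one_half_pow]

lemma ediam_setOf_fin_le {n : ℕ} (p : Fin n → Bool) :
    Metric.ediam {x : ℕ → Bool | ∀ i : Fin n, x i = p i} ≤ 2⁻¹ ^ n := by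
  refine Metric.ediam_le fun x hx y hy => ?_
  have hxy : x ∈ PiNat.cylinder y n := fun i hi => (hx ⟨i, hi⟩).trans (hy ⟨i, hi⟩).symm
  rw [edist_dist, ← ofReal_one_half_pow]
  exact ofReal_le_ofReal (PiNat.mem_cylinder_iff_dist_le.1 hxy)

lemma exists_subset_cylinder_pow_le_ediam {s : Set (ℕ → Bool)} (hs : s.Nontrivial) :
    ∃ z n, s ⊆ PiNat.cylinder z n ∧ 2⁻¹ ^ n ≤ Metric.ediam s := by
  classical
  obtain ⟨a, ha, b, hb, hab⟩ := hs
  have hne : ∃ n, ∃ x ∈ s, ∃ y ∈ s, x ≠ y ∧ PiNat.firstDiff x y = n := ⟨_, a, ha, b, hb, hab, rfl⟩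
  obtain ⟨x, hx, y, hy, hxy, hfirst⟩ := Nat.find_spec hne
  refine ⟨x, Nat.find hne, fun w hw => ?_, ?_⟩
  · rcases eq_or_ne w x with rfl | hwx
    · exact PiNat.self_mem_cylinder _ _
    · exact (PiNat.mem_cylinder_iff_le_firstDiff hwx _).2
        (Nat.find_min' hne ⟨w, hw, x, hx, hwx, rfl⟩)
  · rw [← hfirst, ← edist_eq_of_ne hxy]
    exact Metric.edist_le_ediam_of_mem hx hy

namespace IsCoinFlipping

variable {μ : Measure (ℕ → Bool)}

lemma measure_cylinder (hμ : IsCoinFlipping μ) (z : ℕ → Bool) (n : ℕ) :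
    μ (PiNat.cylinder z n) = 2⁻¹ ^ n := by
  rw [cylinder_eq_setOf_fin, hμ, one_div, ENNReal.inv_pow]

lemma measure_univ (hμ : IsCoinFlipping μ) : μ univ = 1 := by
  simpa using hμ.measure_cylinder (fun _ => false) 0

lemma measure_le_ediam (hμ : IsCoinFlipping μ) (s : Set (ℕ → Bool)) : μ s ≤ Metric.ediam s := by
  rcases s.subsingleton_or_nontrivial with hs | hs
  · obtain rfl | ⟨x, rfl⟩ := hs.eq_empty_or_singleton
    · simp
    · have hr : Tendsto (fun n : ℕ => (2⁻¹ : ℝ≥0∞) ^ n) atTop (𝓝 0) :=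
        tendsto_pow_atTop_nhds_zero_of_lt_one (by norm_num)
      refine (ge_of_tendsto' hr fun n => ?_).trans zero_le
      rw [← hμ.measure_cylinder x n]
      exact measure_mono (singleton_subset_iff.2 (PiNat.self_mem_cylinder x n))
  · obtain ⟨z, n, hsub, hn⟩ := exists_subset_cylinder_pow_le_ediam hs
    calc μ s ≤ μ (PiNat.cylinder z n) := measure_mono hsub
      _ = 2⁻¹ ^ n := hμ.measure_cylinder z n
      _ ≤ Metric.ediam s := hn

lemma le_hausdorffMeasure (hμ : IsCoinFlipping μ) : μ ≤ μH[1] :=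
  Measure.le_hausdorffMeasure 1 μ 1 one_pos fun s _ => by
    rw [rpow_one]
    exact hμ.measure_le_ediam s

end IsCoinFlipping

lemma hausdorffMeasure_univ_le_one : μH[1] (univ : Set (ℕ → Bool)) ≤ 1 := by
  have hcover := hausdorffMeasure_le_liminf_sum (ι := fun m => Fin m → Bool) 1 univ _
    (tendsto_pow_atTop_nhds_zero_of_lt_one (by norm_num : (2⁻¹ : ℝ≥0∞) < 1))
    (fun m p => {x : ℕ → Bool | ∀ i : Fin m, x i = p i})
    (.of_forall fun _ => ediam_setOf_fin_le)
    (.of_forall fun _ x _ => mem_iUnion.2 ⟨fun i => x i, fun _ => rfl⟩)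
  refine hcover.trans (liminf_le_of_frequently_le' (.of_forall fun m => ?_))
  calc ∑ p : Fin m → Bool, Metric.ediam {x : ℕ → Bool | ∀ i : Fin m, x i = p i} ^ (1 : ℝ)
      ≤ ∑ _p : Fin m → Bool, (2⁻¹ : ℝ≥0∞) ^ m :=
        Finset.sum_le_sum fun p _ => by rw [rpow_one]; exact ediam_setOf_fin_le p
    _ = 1 := by
      rw [Finset.sum_const, Finset.card_univ, Fintype.card_fun, nsmul_eq_mul]
      simp [← mul_pow, ENNReal.mul_inv_cancel]

noncomputable def coinFlip : Measure (ℕ → Bool) :=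
  infinitePi fun _ => uniformOn univ

lemma isCoinFlipping_coinFlip : IsCoinFlipping coinFlip := by
  intro n p
  obtain ⟨z, rfl⟩ : ∃ z : ℕ → Bool, p = fun i : Fin n => z i :=
    ⟨fun i => if h : i < n then p ⟨i, h⟩ else false, by simp⟩
  rw [← cylinder_eq_setOf_fin, PiNat.cylinder_eq_pi, coinFlip,
    infinitePi_pi _ fun _ _ => measurableSet_singleton _]
  simp only [uniformOn_univ]
  simp [ENNReal.inv_pow]

lemma hausdorffMeasure_univ : μH[1] (univ : Set (ℕ → Bool)) = 1 :=
  hausdorffMeasure_univ_le_one.antisymm <|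
    isCoinFlipping_coinFlip.measure_univ.symm.trans_le
      (isCoinFlipping_coinFlip.le_hausdorffMeasure univ)

lemma IsCoinFlipping.eq_hausdorffMeasure {μ : Measure (ℕ → Bool)} (hμ : IsCoinFlipping μ) :
    μ = μH[1] :=
  have : IsFiniteMeasure μ := ⟨by rw [hμ.measure_univ]; exact one_lt_top⟩
  eq_of_le_of_measure_univ_eq hμ.le_hausdorffMeasure
    (by rw [hμ.measure_univ, hausdorffMeasure_univ])

end Cantor

/-- In Cantor space with the metric `d(x,y) = 2^{-min{i : x i ≠ y i}}`, the 1-dimensional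
Hausdorff measure of the whole space is 1, and `H^1` coincides on Borel sets with the
product (coin-flipping) measure, i.e. with any measure giving each cylinder of length `n`
measure `2^{-n}`. -/
theorem stmt8 :
    hMeas (fun r => r) (Set.univ : Set (ℕ → Bool)) = 1 ∧
    ∀ μ : Measure (ℕ → Bool),
      (∀ (n : ℕ) (p : Fin n → Bool), μ {x | ∀ i : Fin n, x i = p i} = 1 / 2 ^ n) →
      ∀ S : Set (ℕ → Bool), MeasurableSet S → hMeas (fun r => r) S = μ S := by
  rw [hMeas_id_eq_hausdorffMeasure_one]
  exact ⟨Cantor.hausdorffMeasure_univ, fun μ hμ _ _ => by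
    rw [Cantor.IsCoinFlipping.eq_hausdorffMeasure hμ]⟩
end

section
/- If E ⊆ 2^ℕ is a closed set with H^1(E) = 0 (in the metric d(x,y) = 2^{-min{i: x(i)≠y(i)}}), then limsup_{r→0} N_E(r)·r = 0, where N_E(r) is the minimal number of sets of diameter at most r needed to cover E. -/
open Set Filter MeasureTheory ENNReal

/-- Covering number: least number of sets of diameter at most `δ` covering `E`. -/
noncomputable def covNum {X : Type*} [EMetricSpace X] (E : Set X) (δ : ℝ≥0∞) : ℕ∞ :=
  sInf ((fun 𝒰 : Finset (Set X) => (𝒰.card : ℕ∞)) ''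
    {𝒰 | (E ⊆ ⋃ U ∈ 𝒰, U) ∧ ∀ U ∈ 𝒰, EMetric.diam U ≤ δ})

/-- Upper box premeasure `B₀^g(E) = limsup_{r→0+} N_E(r)·g(r)`. -/
noncomputable def ubox0 {X : Type*} [EMetricSpace X] (E : Set X) (g : ℝ → ℝ) : ℝ≥0∞ :=
  Filter.limsup (fun r : ℝ => (covNum E (ENNReal.ofReal r) : ℝ≥0∞) * ENNReal.ofReal (g r))
    (nhdsWithin 0 (Set.Ioi 0))

/-!
Since `H¹(E) = 0`, `E` is covered by countably many sets with small total diameter. Each of them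
lies in a cylinder of some level `kₙ` with `2^{-kₙ} ≤ 2 diam + (summable slack)`, so
`∑ 2^{-kₙ}` is small, and by compactness finitely many of these cylinders cover `E`. At a scale
`r ∈ (2^{-(m+1)}, 2^{-m}]` finer than all of them, the cylinder of level `kₙ` splits into
`2^{m+1-kₙ}` cylinders of diameter `≤ r`, whence `N_E(r) r ≤ 2 ∑ 2^{-kₙ}` for all small `r`.
-/

open Metric

lemma ENNReal.exists_le_inv_two_pow_of_le_one {d : ℝ≥0∞} (hd : d ≤ 1) (j : ℕ) :
    ∃ k ≤ j, d ≤ 2⁻¹ ^ k ∧ (k < j → 2⁻¹ ^ (k + 1) < d) := by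
  classical
  refine ⟨Nat.findGreatest (fun k => d ≤ 2⁻¹ ^ k) j, Nat.findGreatest_le j,
    Nat.findGreatest_spec (P := fun k => d ≤ 2⁻¹ ^ k) (Nat.zero_le j) (by simpa using hd),
    fun hlt => ?_⟩
  exact not_le.1 (Nat.findGreatest_is_greatest (Nat.lt_succ_self _) hlt)

lemma ENNReal.exists_mem_Ioc_inv_two_pow {δ : ℝ≥0∞} (hδ : δ ≠ 0) (hδ₁ : δ ≤ 1) :
    ∃ m, δ ∈ Set.Ioc (2⁻¹ ^ (m + 1)) (2⁻¹ ^ m) := by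
  obtain ⟨j, hj⟩ := ENNReal.exists_inv_two_pow_lt hδ
  obtain ⟨m, hmj, hδm, hm⟩ := ENNReal.exists_le_inv_two_pow_of_le_one hδ₁ j
  refine ⟨m, hm (lt_of_le_of_ne hmj ?_), hδm⟩
  rintro rfl
  exact hj.not_ge hδm

lemma ENNReal.inv_two_pow_eq_two_mul_inv_two_pow_succ (k : ℕ) :
    (2⁻¹ : ℝ≥0∞) ^ k = 2 * 2⁻¹ ^ (k + 1) := by
  rw [pow_succ, mul_left_comm, ENNReal.mul_inv_cancel two_ne_zero ofNat_ne_top, mul_one]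

lemma ENNReal.exists_inv_two_pow_le_two_mul_add {d : ℝ≥0∞} (hd : d ≤ 1) (j : ℕ) :
    ∃ k, d ≤ 2⁻¹ ^ k ∧ 2⁻¹ ^ k ≤ 2 * d + 2⁻¹ ^ j := by
  obtain ⟨k, hkj, hdk, hk⟩ := ENNReal.exists_le_inv_two_pow_of_le_one hd j
  refine ⟨k, hdk, ?_⟩
  rcases hkj.lt_or_eq with hlt | rfl
  · calc (2⁻¹ : ℝ≥0∞) ^ k = 2 * 2⁻¹ ^ (k + 1) :=
          ENNReal.inv_two_pow_eq_two_mul_inv_two_pow_succ k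
      _ ≤ 2 * d := by gcongr; exact (hk hlt).le
      _ ≤ 2 * d + 2⁻¹ ^ j := le_self_add
  · exact le_add_self

lemma edist_le_inv_two_pow_iff {x y : ℕ → Bool} {n : ℕ} :
    edist y x ≤ 2⁻¹ ^ n ↔ y ∈ PiNat.cylinder x n := by
  rw [PiNat.mem_cylinder_iff_dist_le, edist_dist, ← ENNReal.ofReal_le_ofReal_iff (by positivity),
    ENNReal.ofReal_pow (by norm_num), one_div, ENNReal.ofReal_inv_of_pos two_pos,
    ENNReal.ofReal_ofNat]

lemma ediam_le_inv_two_pow_iff {S : Set (ℕ → Bool)} {n : ℕ} :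
    ediam S ≤ 2⁻¹ ^ n ↔ ∀ y ∈ S, ∀ x ∈ S, y ∈ PiNat.cylinder x n := by
  simp only [ediam_le_iff, edist_le_inv_two_pow_iff]

lemma exists_subset_cylinder_of_ediam_le {S : Set (ℕ → Bool)} {n : ℕ}
    (hS : ediam S ≤ 2⁻¹ ^ n) : ∃ x, S ⊆ PiNat.cylinder x n := by
  rcases S.eq_empty_or_nonempty with rfl | ⟨x, hx⟩
  · exact ⟨fun _ => false, Set.empty_subset _⟩
  · exact ⟨x, fun y hy => ediam_le_inv_two_pow_iff.1 hS y hy x hx⟩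

section CoveringNumber

variable {X : Type*} [EMetricSpace X]

lemma covNum_le_card {E : Set X} {δ : ℝ≥0∞} {𝒰 : Finset (Set X)} (hcov : E ⊆ ⋃ U ∈ 𝒰, U)
    (hdiam : ∀ U ∈ 𝒰, ediam U ≤ δ) : covNum E δ ≤ 𝒰.card :=
  sInf_le ⟨𝒰, ⟨hcov, hdiam⟩, rfl⟩

lemma covNum_mono {E E' : Set X} {δ δ' : ℝ≥0∞} (hE : E ⊆ E') (hδ : δ ≤ δ') :
    covNum E δ' ≤ covNum E' δ :=
  sInf_le_sInf <| Set.image_mono fun _ h𝒰 => ⟨hE.trans h𝒰.1, fun U hU => (h𝒰.2 U hU).trans hδ⟩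

end CoveringNumber

lemma exists_finset_cover_cylinder (x : ℕ → Bool) (k m : ℕ) :
    ∃ 𝒰 : Finset (Set (ℕ → Bool)), 𝒰.card ≤ 2 ^ (m - k) ∧
      PiNat.cylinder x k ⊆ ⋃ U ∈ 𝒰, U ∧ ∀ U ∈ 𝒰, ediam U ≤ 2⁻¹ ^ m := by
  classical
  let piece (w : Fin (m - k) → Bool) : Set (ℕ → Bool) :=
    {y ∈ PiNat.cylinder x k | ∀ j : Fin (m - k), y (k + j) = w j}
  refine ⟨Finset.univ.image piece, ?_, ?_, ?_⟩
  · exact Finset.card_image_le.trans (by simp)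
  · intro y hy
    exact Set.mem_biUnion
      (Finset.mem_image_of_mem piece (Finset.mem_univ fun j : Fin (m - k) => y (k + j)))
      ⟨hy, fun _ => rfl⟩
  · simp only [Finset.mem_image, Finset.mem_univ, true_and, forall_exists_index,
      forall_apply_eq_imp_iff, ediam_le_inv_two_pow_iff]
    rintro w y ⟨hyx, hyw⟩ z ⟨hzx, hzw⟩ i hi
    by_cases hik : i < k
    · rw [PiNat.mem_cylinder_iff.1 hyx i hik, PiNat.mem_cylinder_iff.1 hzx i hik]
    · obtain ⟨j, rfl⟩ := Nat.exists_eq_add_of_le (not_lt.1 hik)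
      exact (hyw ⟨j, by omega⟩).trans (hzw ⟨j, by omega⟩).symm

lemma two_pow_sub_mul_inv_two_pow {k m : ℕ} (hkm : k ≤ m) :
    (2 : ℝ≥0∞) ^ (m - k) * 2⁻¹ ^ m = 2⁻¹ ^ k := by
  rw [← Nat.sub_add_cancel hkm, pow_add, Nat.add_sub_cancel, ← mul_assoc, ← mul_pow,
    ENNReal.mul_inv_cancel two_ne_zero ofNat_ne_top, one_pow, one_mul]

lemma covNum_biUnion_cylinder_mul_le {ι : Type*} (F : Finset ι) (c : ι → ℕ → Bool) (k : ι → ℕ)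
    {m : ℕ} (hkm : ∀ i ∈ F, k i ≤ m) :
    (covNum (⋃ i ∈ F, PiNat.cylinder (c i) (k i)) (2⁻¹ ^ m) : ℝ≥0∞) * 2⁻¹ ^ m ≤
      ∑ i ∈ F, 2⁻¹ ^ k i := by
  classical
  choose 𝒰 h𝒰card h𝒰cov h𝒰diam using fun i => exists_finset_cover_cylinder (c i) (k i) m
  have hcov : ⋃ i ∈ F, PiNat.cylinder (c i) (k i) ⊆ ⋃ U ∈ F.biUnion 𝒰, U := by
    simp only [Finset.set_biUnion_biUnion]
    exact Set.biUnion_mono subset_rfl fun i _ => h𝒰cov i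
  have hdiam : ∀ U ∈ F.biUnion 𝒰, ediam U ≤ 2⁻¹ ^ m := by
    simp only [Finset.mem_biUnion]
    rintro U ⟨i, -, hU⟩
    exact h𝒰diam i U hU
  have hcard : (covNum (⋃ i ∈ F, PiNat.cylinder (c i) (k i)) (2⁻¹ ^ m) : ℝ≥0∞) ≤
      ∑ i ∈ F, (2 : ℝ≥0∞) ^ (m - k i) := by
    calc _ ≤ ((F.biUnion 𝒰).card : ℝ≥0∞) := by
          exact_mod_cast ENat.toENNReal_le.2 (covNum_le_card hcov hdiam)
      _ ≤ ∑ i ∈ F, ((𝒰 i).card : ℝ≥0∞) := by exact_mod_cast Finset.card_biUnion_le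
      _ ≤ ∑ i ∈ F, (2 : ℝ≥0∞) ^ (m - k i) := by
          gcongr with i
          exact_mod_cast h𝒰card i
  calc _ ≤ (∑ i ∈ F, (2 : ℝ≥0∞) ^ (m - k i)) * 2⁻¹ ^ m := by gcongr
    _ = ∑ i ∈ F, 2⁻¹ ^ k i := by
        rw [Finset.sum_mul]
        exact Finset.sum_congr rfl fun i hi => two_pow_sub_mul_inv_two_pow (hkm i hi)

lemma exists_cover_tsum_ediam_lt_of_hMeas_eq_zero {X : Type*} [EMetricSpace X]
    [MeasurableSpace X] [BorelSpace X] {E : Set X} (hE : hMeas (fun r => r) E = 0)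
    {r ε : ℝ≥0∞} (hr : 0 < r) (hr_top : r ≠ ∞) (hε : 0 < ε) :
    ∃ t : ℕ → Set X, E ⊆ ⋃ n, t n ∧ (∀ n, ediam (t n) ≤ r) ∧ ∑' n, ediam (t n) < ε := by
  rw [hMeas, Measure.mkMetric_apply] at hE
  have hinf := ((le_iSup₂ (f := fun r (_ : 0 < r) => _) r hr).trans hE.le).trans_lt hε
  obtain ⟨t, hinf⟩ := iInf_lt_iff.1 hinf
  obtain ⟨hcov, hinf⟩ := iInf_lt_iff.1 hinf
  obtain ⟨hdiam, hsum⟩ := iInf_lt_iff.1 hinf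
  refine ⟨t, hcov, hdiam, hsum.trans_eq' (tsum_congr fun n => ?_)⟩
  rcases (t n).eq_empty_or_nonempty with h | h
  · simp [h]
  · rw [iSup_pos h, ENNReal.ofReal_toReal ((hdiam n).trans_lt hr_top.lt_top).ne]

lemma exists_cylinder_cover_tsum_le_of_hMeas_eq_zero {E : Set (ℕ → Bool)}
    (hE : hMeas (fun r => r) E = 0) {ε : ℝ≥0∞} (hε : 0 < ε) :
    ∃ (c : ℕ → ℕ → Bool) (k : ℕ → ℕ),
      E ⊆ ⋃ n, PiNat.cylinder (c n) (k n) ∧ ∑' n, (2⁻¹ : ℝ≥0∞) ^ k n ≤ ε := by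
  have hε₂ : 0 < ε / 2 := ENNReal.half_pos hε.ne'
  obtain ⟨t, hcov, hdiam, hsum⟩ := exists_cover_tsum_ediam_lt_of_hMeas_eq_zero hE one_pos
    ENNReal.one_ne_top (ENNReal.half_pos hε₂.ne')
  obtain ⟨K, hK⟩ := ENNReal.exists_inv_two_pow_lt hε₂.ne'
  -- the slack `2⁻¹ ^ (n + K + 1)` handles the sets of diameter zero
  choose k hdiam_le hk using
    fun n => ENNReal.exists_inv_two_pow_le_two_mul_add (hdiam n) (n + K + 1)
  choose c hc using fun n => exists_subset_cylinder_of_ediam_le (hdiam_le n)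
  refine ⟨c, k, hcov.trans (Set.iUnion_mono hc), ?_⟩
  have hslack : ∑' n, (2⁻¹ : ℝ≥0∞) ^ (n + K + 1) = 2⁻¹ ^ K := by
    calc ∑' n, (2⁻¹ : ℝ≥0∞) ^ (n + K + 1) = ∑' n, 2⁻¹ ^ (n + 1) * 2⁻¹ ^ K := by
          simp only [add_right_comm _ K, pow_add]
      _ = 2⁻¹ ^ K := by
          rw [ENNReal.tsum_mul_right, ENNReal.tsum_geometric_add_one, ENNReal.one_sub_inv_two,
            inv_inv, ENNReal.inv_mul_cancel two_ne_zero ofNat_ne_top, one_mul]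
  calc ∑' n, (2⁻¹ : ℝ≥0∞) ^ k n ≤ ∑' n, (2 * ediam (t n) + 2⁻¹ ^ (n + K + 1)) :=
        ENNReal.tsum_le_tsum hk
    _ = 2 * ∑' n, ediam (t n) + 2⁻¹ ^ K := by
        rw [ENNReal.tsum_add, ENNReal.tsum_mul_left, hslack]
    _ ≤ 2 * (ε / 2 / 2) + ε / 2 := by gcongr
    _ = ε := by rw [ENNReal.mul_div_cancel two_ne_zero ofNat_ne_top, ENNReal.add_halves]

lemma covNum_mul_le_of_subset_biUnion_cylinder {ι : Type*} {E : Set (ℕ → Bool)} {F : Finset ι}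
    {c : ι → ℕ → Bool} {k : ι → ℕ} (hE : E ⊆ ⋃ i ∈ F, PiNat.cylinder (c i) (k i))
    {δ : ℝ≥0∞} (hδ : δ ≠ 0) (hδF : δ < 2⁻¹ ^ F.sup k) :
    (covNum E δ : ℝ≥0∞) * δ ≤ 2 * ∑ i ∈ F, 2⁻¹ ^ k i := by
  obtain ⟨m, hmδ, hδm⟩ := ENNReal.exists_mem_Ioc_inv_two_pow hδ
    (hδF.le.trans (pow_le_one₀ zero_le (ENNReal.inv_le_one.2 one_le_two)))
  have hkm : ∀ i ∈ F, k i ≤ m + 1 := by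
    refine fun i hi => (Finset.le_sup hi).trans (le_of_not_gt fun hlt => ?_)
    exact (hmδ.trans hδF).not_ge
      (pow_le_pow_right_of_le_one' (ENNReal.inv_le_one.2 one_le_two) hlt.le)
  calc (covNum E δ : ℝ≥0∞) * δ
      ≤ covNum (⋃ i ∈ F, PiNat.cylinder (c i) (k i)) (2⁻¹ ^ (m + 1)) * (2 * 2⁻¹ ^ (m + 1)) := by
        gcongr
        · exact_mod_cast ENat.toENNReal_le.2 (covNum_mono hE hmδ.le)
        · rwa [← ENNReal.inv_two_pow_eq_two_mul_inv_two_pow_succ]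
    _ ≤ 2 * ∑ i ∈ F, 2⁻¹ ^ k i := by
        rw [mul_left_comm]
        gcongr
        exact covNum_biUnion_cylinder_mul_le F c k hkm

/-- A closed subset of Cantor space of `H^1`-measure zero has vanishing upper box
premeasure `limsup_{r→0} N_E(r)·r`. -/
theorem stmt9 (E : Set (ℕ → Bool)) (hE : IsClosed E)
    (h0 : hMeas (fun r => r) E = 0) :
    ubox0 E (fun r => r) = 0 := by
  refine le_antisymm (le_of_forall_gt_imp_ge_of_dense fun ε hε => ?_) zero_le
  obtain ⟨c, k, hcov, hsum⟩ :=
    exists_cylinder_cover_tsum_le_of_hMeas_eq_zero h0 (ENNReal.half_pos hε.ne')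
  obtain ⟨F, hF⟩ := hE.isCompact.elim_finite_subcover _
    (fun n => PiNat.isOpen_cylinder (E := fun _ => Bool) (c n) (k n)) hcov
  have hsmall : ∀ᶠ r in nhdsWithin (0 : ℝ) (Set.Ioi 0), ENNReal.ofReal r < 2⁻¹ ^ F.sup k :=
    ((ENNReal.continuous_ofReal.tendsto' 0 0 ENNReal.ofReal_zero).mono_left
      nhdsWithin_le_nhds).eventually (gt_mem_nhds (ENNReal.pow_pos (by simp) _))
  refine limsup_le_of_le (by isBoundedDefault) ?_
  filter_upwards [hsmall, self_mem_nhdsWithin] with r hr hr0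
  calc (covNum E (ENNReal.ofReal r) : ℝ≥0∞) * ENNReal.ofReal r
      ≤ 2 * ∑ n ∈ F, 2⁻¹ ^ k n :=
        covNum_mul_le_of_subset_biUnion_cylinder hF (ENNReal.ofReal_pos.2 hr0).ne' hr
    _ ≤ 2 * (ε / 2) := by gcongr; exact (ENNReal.sum_le_tsum F).trans hsum
    _ = ε := ENNReal.mul_div_cancel two_ne_zero ofNat_ne_top
end

section
/- If X is a strong measure zero metric space and Y is a metric space such that for every ε > 0 there is a finite cover {U_1,…,U_N} of Y with Σ_i h(diam U_i) < ε (i.e. the upper Hausdorff premeasure of Y is zero), then H^h(X × Y) = 0, where X × Y carries the maximum metric. -/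
open Set Filter MeasureTheory ENNReal

/-!
Fix `δ, ε > 0` and split `ε` into positive pieces `η n`. For each `n`, take a finite
`δ/2`-cover `𝒰 n` of `Y` with `∑ h (diam U) < η n`; by right-continuity of `h` there is
`ρ n > 0` so small that still `∑ h (diam U + ρ n) < η n`. Strong measure zero of `X` gives
`A n` with `diam (A n) ≤ ρ n` covering `X`, and in the maximum metric
`diam (A n × U) ≤ diam U + ρ n`. So the rectangles `A n × U`, `U ∈ 𝒰 n`, form a countable
`δ`-cover of `X × Y` with `h`-sum at most `∑ η n ≤ ε`.
-/

open Topology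

theorem Metric.ediam_prod_le {X Y : Type*} [PseudoEMetricSpace X] [PseudoEMetricSpace Y]
    (s : Set X) (u : Set Y) : Metric.ediam (s ×ˢ u) ≤ max (Metric.ediam s) (Metric.ediam u) := by
  refine Metric.ediam_le ?_
  rintro ⟨x₁, y₁⟩ ⟨hx₁, hy₁⟩ ⟨x₂, y₂⟩ ⟨hx₂, hy₂⟩
  exact max_le_max (Metric.edist_le_ediam_of_mem hx₁ hx₂) (Metric.edist_le_ediam_of_mem hy₁ hy₂)

theorem Metric.ediam_prod_le_ofReal_diam_add {X Y : Type*} [PseudoMetricSpace X]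
    [PseudoMetricSpace Y] {s : Set X} {u : Set Y} {ρ : ℝ} (hρ : 0 ≤ ρ)
    (hs : Metric.ediam s ≤ ENNReal.ofReal ρ) (hu : Metric.ediam u ≠ ∞) :
    Metric.ediam (s ×ˢ u) ≤ ENNReal.ofReal (Metric.diam u + ρ) := by
  refine (Metric.ediam_prod_le s u).trans (max_le ?_ ?_)
  · exact hs.trans (ofReal_le_ofReal (le_add_of_nonneg_left Metric.diam_nonneg))
  · rw [← ofReal_toReal hu]
    exact ofReal_le_ofReal (le_add_of_nonneg_right hρ)

theorem eventually_sum_add_lt {h : ℝ → ℝ} (hcont : ∀ r, 0 ≤ r → ContinuousWithinAt h (Ici r) r)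
    {ι : Type*} (s : Finset ι) {a : ι → ℝ} (ha : ∀ i ∈ s, 0 ≤ a i) {η : ℝ}
    (hη : ∑ i ∈ s, h (a i) < η) : ∀ᶠ ρ in 𝓝[>] 0, ∑ i ∈ s, h (a i + ρ) < η := by
  have hshift : ∀ i ∈ s, Tendsto (fun ρ => h (a i + ρ)) (𝓝[>] 0) (𝓝 (h (a i))) := by
    intro i hi
    have hc : ContinuousWithinAt (fun ρ => h (a i + ρ)) (Ici 0) 0 :=
      (hcont (a i) (ha i hi)).comp_of_eq (continuous_const_add (a i)).continuousWithinAt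
        (fun _ hρ => mem_Ici.2 (le_add_of_nonneg_right hρ)) (add_zero _)
    simpa using hc.tendsto.mono_left (nhdsWithin_mono _ Ioi_subset_Ici_self)
  exact (tendsto_finsetSum s hshift).eventually (gt_mem_nhds hη)

theorem MeasureTheory.Measure.mkMetric_eq_zero_of_forall_cover.{v} {X : Type*} [EMetricSpace X]
    [MeasurableSpace X] [BorelSpace X] (m : ℝ≥0∞ → ℝ≥0∞) (s : Set X)
    (H : ∀ δ > (0 : ℝ), ∀ ε ≠ (0 : ℝ≥0∞), ∃ (ι : Type v) (_ : Countable ι) (t : ι → Set X),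
      s ⊆ ⋃ i, t i ∧ (∀ i, Metric.ediam (t i) ≤ ENNReal.ofReal δ) ∧
        ∑' i, m (Metric.ediam (t i)) ≤ ε) :
    mkMetric m s = 0 := by
  refine le_antisymm (le_of_forall_gt_imp_ge_of_dense fun ε hε => ?_) bot_le
  choose ι hι t hst ht hsum using fun j : ℕ => H (1 / (j + 1)) (by positivity) ε hε.ne'
  have hr : Tendsto (fun j : ℕ => ENNReal.ofReal (1 / (j + 1))) atTop (𝓝 0) := by
    simpa using (ENNReal.tendsto_ofReal tendsto_one_div_add_atTop_nhds_zero_nat)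
  calc mkMetric m s ≤ liminf (fun j => ∑' i, m (Metric.ediam (t j i))) atTop :=
        mkMetric_le_liminf_tsum s _ hr t (.of_forall ht) (.of_forall hst) m
    _ ≤ ε := liminf_le_of_le (by isBoundedDefault) fun _ hb =>
        hb.exists.elim fun j hj => hj.trans (hsum j)

theorem sum_ofReal_diam_prod_le {X Y : Type*} [PseudoMetricSpace X] [PseudoMetricSpace Y]
    {h : ℝ → ℝ} (hpos : ∀ r, 0 ≤ r → 0 ≤ h r) (hmono : MonotoneOn h (Ici 0)) {A : Set X}
    {ρ : ℝ} (hρ : 0 ≤ ρ) (hA : Metric.ediam A ≤ ENNReal.ofReal ρ) (𝒰 : Finset (Set Y))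
    (h𝒰 : ∀ U ∈ 𝒰, Metric.ediam U ≠ ∞) :
    ∑ U ∈ 𝒰, ENNReal.ofReal (h (Metric.diam (A ×ˢ U))) ≤
      ENNReal.ofReal (∑ U ∈ 𝒰, h (Metric.diam U + ρ)) := by
  have hnonneg : ∀ U : Set Y, 0 ≤ Metric.diam U + ρ := fun _ => add_nonneg Metric.diam_nonneg hρ
  rw [ofReal_sum_of_nonneg fun U _ => hpos _ (hnonneg U)]
  refine Finset.sum_le_sum fun U hU => ofReal_le_ofReal <|
    hmono Metric.diam_nonneg (hnonneg U) <| toReal_le_of_le_ofReal (hnonneg U) ?_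
  exact Metric.ediam_prod_le_ofReal_diam_add hρ hA (h𝒰 U hU)

theorem exists_prod_cover_tsum_le.{v} {X : Type*} {Y : Type v} [MetricSpace X] [MetricSpace Y]
    {h : ℝ → ℝ}
    (hh : IsHausdorffFn h) (hX : SMZ X)
    (hY : ∀ δ > (0 : ℝ), ∀ ε > (0 : ℝ), ∃ 𝒰 : Finset (Set Y),
      (∀ y : Y, ∃ U ∈ 𝒰, y ∈ U) ∧
      (∀ U ∈ 𝒰, Metric.ediam U ≤ ENNReal.ofReal δ) ∧
      ∑ U ∈ 𝒰, h (Metric.diam U) < ε)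
    {δ : ℝ} (hδ : 0 < δ) {ε : ℝ≥0∞} (hε : ε ≠ 0) :
    ∃ (ι : Type v) (_ : Countable ι) (t : ι → Set (X × Y)), univ ⊆ ⋃ i, t i ∧
      (∀ i, Metric.ediam (t i) ≤ ENNReal.ofReal δ) ∧
      ∑' i, ENNReal.ofReal (h (Metric.diam (t i))) ≤ ε := by
  obtain ⟨hpos, hmono, hcont, -⟩ := hh
  obtain ⟨η, hη, hηε⟩ := ENNReal.exists_pos_sum_of_countable hε ℕ
  have stage : ∀ n, ∃ 𝒰 : Finset (Set Y), ∃ ρ : ℝ, (0 < ρ ∧ ρ < δ / 2) ∧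
      (∀ y, ∃ U ∈ 𝒰, y ∈ U) ∧ (∀ U ∈ 𝒰, Metric.ediam U ≤ ENNReal.ofReal (δ / 2)) ∧
      ∑ U ∈ 𝒰, h (Metric.diam U + ρ) < η n := by
    intro n
    obtain ⟨𝒰, hcov, hdiam, hsum⟩ := hY (δ / 2) (by positivity) (η n) (hη n)
    obtain ⟨ρ, hρsum, hρ⟩ := ((eventually_sum_add_lt hcont 𝒰 (fun _ _ => Metric.diam_nonneg)
      hsum).and (Ioo_mem_nhdsGT (half_pos hδ))).exists
    exact ⟨𝒰, ρ, hρ, hcov, hdiam, hρsum⟩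
  choose 𝒰 ρ hρ hcov hdiam hsum using stage
  choose A hAcov hAdiam using hX ρ fun n => (hρ n).1
  have hU_top : ∀ n, ∀ U ∈ 𝒰 n, Metric.ediam U ≠ ∞ := fun n U hU =>
    ((hdiam n U hU).trans_lt ofReal_lt_top).ne
  refine ⟨Σ n, {U // U ∈ 𝒰 n}, inferInstance, fun i => A i.1 ×ˢ i.2.1, ?_, ?_, ?_⟩
  · rintro ⟨x, y⟩ -
    obtain ⟨n, hx⟩ := hAcov x
    obtain ⟨U, hU, hy⟩ := hcov n y
    exact mem_iUnion.2 ⟨⟨n, U, hU⟩, hx, hy⟩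
  · rintro ⟨n, U, hU⟩
    refine (Metric.ediam_prod_le_ofReal_diam_add (hρ n).1.le (hAdiam n) (hU_top n U hU)).trans
      (ofReal_le_ofReal ?_)
    have : Metric.diam U ≤ δ / 2 := toReal_le_of_le_ofReal (by positivity) (hdiam n U hU)
    linarith [(hρ n).2]
  · calc ∑' i : Σ n, {U // U ∈ 𝒰 n}, ENNReal.ofReal (h (Metric.diam (A i.1 ×ˢ i.2.1)))
        = ∑' n, ∑ U ∈ 𝒰 n, ENNReal.ofReal (h (Metric.diam (A n ×ˢ U))) := by
          rw [ENNReal.tsum_sigma']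
          exact tsum_congr fun n =>
            Finset.tsum_subtype (𝒰 n) fun U => ENNReal.ofReal (h (Metric.diam (A n ×ˢ U)))
      _ ≤ ∑' n, (η n : ℝ≥0∞) := ENNReal.tsum_le_tsum fun n => ?_
      _ ≤ ε := hηε.le
    calc ∑ U ∈ 𝒰 n, ENNReal.ofReal (h (Metric.diam (A n ×ˢ U)))
        ≤ ENNReal.ofReal (∑ U ∈ 𝒰 n, h (Metric.diam U + ρ n)) :=
          sum_ofReal_diam_prod_le hpos hmono (hρ n).1.le (hAdiam n) (𝒰 n) (hU_top n)
      _ ≤ η n := by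
          rw [← ofReal_coe_nnreal]
          exact ofReal_le_ofReal (hsum n).le

/-- If `X` has strong measure zero and the upper Hausdorff premeasure of `Y` with gauge `h`
is zero (for all `δ, ε > 0` there is a finite `δ`-cover with Hausdorff sum `< ε`), then
`H^h(X × Y) = 0`, the product carrying the maximum metric. -/
theorem stmt12 {X Y : Type*} [MetricSpace X] [MetricSpace Y]
    [MeasurableSpace (X × Y)] [BorelSpace (X × Y)]
    (h : ℝ → ℝ) (hh : IsHausdorffFn h) (hX : SMZ X)
    (hY : ∀ δ > (0 : ℝ), ∀ ε > (0 : ℝ), ∃ 𝒰 : Finset (Set Y),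
      (∀ y : Y, ∃ U ∈ 𝒰, y ∈ U) ∧
      (∀ U ∈ 𝒰, EMetric.diam U ≤ ENNReal.ofReal δ) ∧
      ∑ U ∈ 𝒰, h (Metric.diam U) < ε) :
    hMeas h (Set.univ : Set (X × Y)) = 0 :=
  Measure.mkMetric_eq_zero_of_forall_cover _ _ fun _ hδ _ hε =>
    exists_prod_cover_tsum_le hh hX hY hδ hε
end
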